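/- arXiv:2405.06809 — 4 statements merged into one kernel-verified Lean document; each statement's English description precedes it below -/
import Mathlib

section
/- Under the hypotheses of the preceding construction, if additionally h₁(x) = O(x^{κ+1}) and h₂(x) = O(x^{κ+1}) as x → 0, f(x) ∼ x^κ and g(x) ∼ -p₁(0)/(2κ+1) x^{κ+1} with p₁(0) ≠ 0, then the solution (u,v) of the non-homogeneous system given by the integral formulas satisfies u(x) = O(x f(x)) and v(x) = O(x g(x)) as x → 0, and it is the unique solution with these asymptotics. -/
/-!
Near `0` we have `f ≍ x ^ κ` and, since `p₁ 0 ≠ 0`, `g ≍ x ^ (κ + 1)`. Hence the integrand of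
`z = ∫₀ˣ (h₁ f + h₂ g)` is `O(x ^ (2κ + 1))`, so `z = O(x ^ (2κ + 2))`; then the integrand of
`I = ∫₀ˣ (-(h₂ / f) + p₂ z / f²)` is `O(x)`, so `I = O(x²)`. This gives `u = f I = O(x f)` and
`v = g I + z / f = O(x g)`.

If `(u₁, v₁)` is another solution with these asymptotics, the Wronskian-type quantity
`f v₁ - g u₁ - z` has zero derivative and tends to `0` at `0`, so `f v₁ - g u₁ = z`. With this,
`u₁ / f - I` also has zero derivative and tends to `0`, so `u₁ = f I = u`, and then `v₁ = v`.
-/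

open Set Filter Topology intervalIntegral MeasureTheory Asymptotics

namespace Asymptotics

theorem isBigO_rpow_rpow_nhdsGT_zero_of_le {a b : ℝ} (h : a ≤ b) :
    (fun x : ℝ => x ^ b) =O[𝓝[>] 0] fun x => x ^ a := by
  refine Eventually.isBigO ?_
  filter_upwards [Ioo_mem_nhdsGT one_pos] with x hx
  rw [Real.norm_of_nonneg (Real.rpow_nonneg hx.1.le b)]
  exact Real.rpow_le_rpow_of_exponent_ge hx.1 hx.2.le h

theorem rpow_add_eventuallyEq_nhdsGT_zero (a b : ℝ) :
    (fun x : ℝ => x ^ (a + b)) =ᶠ[𝓝[>] 0] fun x => x ^ a * x ^ b := by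
  filter_upwards [self_mem_nhdsWithin] with x hx
  exact Real.rpow_add hx a b

theorem IsBigO.mul_nhdsGT_zero_rpow {R : Type*} [SeminormedRing R] {f g : ℝ → R} {a b c : ℝ}
    (hf : f =O[𝓝[>] 0] fun x => x ^ a) (hg : g =O[𝓝[>] 0] fun x => x ^ b) (h : c ≤ a + b) :
    (fun x => f x * g x) =O[𝓝[>] 0] fun x => x ^ c :=
  (hf.mul hg).trans ((rpow_add_eventuallyEq_nhdsGT_zero a b).symm.trans_isBigO
    (isBigO_rpow_rpow_nhdsGT_zero_of_le h))

theorem IsBigO.tendsto_zero_of_rpow {E : Type*} [NormedAddCommGroup E] {F : ℝ → E} {r : ℝ}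
    (hr : 0 < r) (h : F =O[𝓝[>] 0] fun x => x ^ r) : Tendsto F (𝓝[>] 0) (𝓝 0) := by
  refine h.trans_tendsto ?_
  have := (Real.continuousAt_rpow_const 0 r (Or.inr hr.le)).tendsto
  rw [Real.zero_rpow hr.ne'] at this
  exact this.mono_left nhdsWithin_le_nhds

theorem IsBigO.primitive_nhdsGT_zero_rpow {E : Type*} [NormedAddCommGroup E] [NormedSpace ℝ E]
    {φ : ℝ → E} {r : ℝ} (hr : 0 ≤ r) (h : φ =O[𝓝[>] 0] fun x => x ^ r) :
    (fun x => ∫ t in (0 : ℝ)..x, φ t) =O[𝓝[>] 0] fun x => x ^ (r + 1) := by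
  obtain ⟨C, hC, hCφ⟩ := h.exists_nonneg
  obtain ⟨δ, hδ, hδφ⟩ := mem_nhdsGT_iff_exists_Ioc_subset.1 hCφ.bound
  refine IsBigO.of_bound C ?_
  filter_upwards [Ioc_mem_nhdsGT hδ] with x hx
  have hbound : ∀ t ∈ Set.uIoc 0 x, ‖φ t‖ ≤ C * x ^ r := by
    intro t ht
    rw [uIoc_of_le hx.1.le] at ht
    calc ‖φ t‖ ≤ C * ‖t ^ r‖ := hδφ ⟨ht.1, ht.2.trans hx.2⟩
      _ = C * t ^ r := by rw [Real.norm_of_nonneg (Real.rpow_nonneg ht.1.le r)]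
      _ ≤ C * x ^ r := by gcongr; exacts [ht.1.le, ht.2]
  calc ‖∫ t in (0 : ℝ)..x, φ t‖ ≤ C * x ^ r * |x - 0| := norm_integral_le_of_norm_le_const hbound
    _ = C * ‖x ^ (r + 1)‖ := by
      rw [sub_zero, abs_of_pos hx.1, Real.norm_of_nonneg (Real.rpow_nonneg hx.1.le _),
        Real.rpow_add_one hx.1.ne', mul_assoc]

theorem isTheta_of_tendsto_div_ofReal {α : Type*} {l : Filter α} {F : α → ℂ} {φ : α → ℝ} {c : ℂ}
    (hc : c ≠ 0) (h : Tendsto (fun x => F x / (φ x : ℂ)) l (𝓝 c)) : F =Θ[l] φ :=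
  Complex.isTheta_ofReal_right.mp (isTheta_of_div_tendsto_nhds_ne_zero h hc).symm

theorem IsTheta.inv_nhdsGT_zero_rpow {𝕜 : Type*} [NormedField 𝕜] {F : ℝ → 𝕜} {r : ℝ}
    (h : F =Θ[𝓝[>] 0] fun x => x ^ r) : (fun x => (F x)⁻¹) =Θ[𝓝[>] 0] fun x => x ^ (-r) := by
  refine h.inv.trans_eventuallyEq ?_
  filter_upwards [self_mem_nhdsWithin] with x hx
  exact (Real.rpow_neg (le_of_lt hx) r).symm

theorem isTheta_ofReal_rpow_one (l : Filter ℝ) :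
    (fun x : ℝ => (x : ℂ)) =Θ[l] fun x => x ^ (1 : ℝ) := by
  simpa only [Real.rpow_one] using Complex.isTheta_ofReal (fun x => x) l

end Asymptotics

theorem tendsto_ofReal_nhdsGT_zero : Tendsto (fun x : ℝ => (x : ℂ)) (𝓝[>] 0) (𝓝 0) :=
  (Complex.continuous_ofReal.tendsto' 0 0 Complex.ofReal_zero).mono_left nhdsWithin_le_nhds

section Calculus

variable {E : Type*} [NormedAddCommGroup E] [NormedSpace ℝ E]

theorem eqOn_zero_of_hasDerivAt_zero_of_tendsto {F : ℝ → E} {a : ℝ}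
    (hd : ∀ x ∈ Ioo 0 a, HasDerivAt F 0 x) (hc : ContinuousOn F (Ioc 0 a))
    (h0 : Tendsto F (𝓝[>] 0) (𝓝 0)) : EqOn F 0 (Ioc 0 a) := by
  intro x hx
  have hconst : ∀ t ∈ Ioc 0 x, F t = F x := by
    intro t ht
    have hsub : Icc t x ⊆ Ioc 0 a := fun y hy => ⟨ht.1.trans_le hy.1, hy.2.trans hx.2⟩
    refine (constant_of_has_deriv_right_zero (hc.mono hsub) (fun y hy => ?_) x
      (right_mem_Icc.2 ht.2)).symm
    exact (hd y ⟨ht.1.trans_le hy.1, hy.2.trans_le hx.2⟩).hasDerivWithinAt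
  have hlim : Tendsto F (𝓝[>] 0) (𝓝 (F x)) :=
    tendsto_const_nhds.congr' (eventuallyEq_of_mem (Ioc_mem_nhdsGT hx.1) hconst).symm
  exact tendsto_nhds_unique hlim h0

theorem hasDerivAt_and_continuousOn_of_eqOn_primitive [CompleteSpace E] {φ F : ℝ → E} {a : ℝ}
    (ha : 0 < a) (hF : ∀ y ∈ Ioc 0 a, F y = ∫ t in (0 : ℝ)..y, φ t)
    (hint : ∀ x ∈ Ioc 0 a, IntervalIntegrable φ volume 0 x) (hφ : ContinuousOn φ (Ioo 0 a)) :
    (∀ x ∈ Ioo 0 a, HasDerivAt F (φ x) x) ∧ ContinuousOn F (Ioc 0 a) := by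
  refine ⟨fun x hx => ?_, ?_⟩
  · refine (integral_hasDerivAt_right (hint x (Ioo_subset_Ioc_self hx))
      (hφ.stronglyMeasurableAtFilter isOpen_Ioo x hx)
      (hφ.continuousAt (isOpen_Ioo.mem_nhds hx))).congr_of_eventuallyEq ?_
    filter_upwards [isOpen_Ioo.mem_nhds hx] with y hy
    exact hF y (Ioo_subset_Ioc_self hy)
  · refine ((continuousOn_primitive_interval' (hint a ⟨ha, le_rfl⟩) left_mem_uIcc).mono ?_).congr hF
    rw [uIcc_of_le ha.le]
    exact Ioc_subset_Icc_self

end Calculus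

section DiracSystem

-- `c` stands for the coefficient `κ / x + q x` of the radial Dirac system.
variable {a : ℝ} {p₁ p₂ c f g f' g' h₁ h₂ u v u' v' z I : ℝ → ℂ}

theorem wronskian_eqOn_of_tendsto
    (hf : ∀ x ∈ Ioc 0 a, HasDerivAt f (f' x) x) (hg : ∀ x ∈ Ioc 0 a, HasDerivAt g (g' x) x)
    (hu : ∀ x ∈ Ioc 0 a, HasDerivAt u (u' x) x) (hv : ∀ x ∈ Ioc 0 a, HasDerivAt v (v' x) x)
    (hsys1 : ∀ x ∈ Ioc 0 a, g' x + p₁ x * f x + c x * g x = 0)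
    (hsys2 : ∀ x ∈ Ioc 0 a, -f' x + c x * f x + p₂ x * g x = 0)
    (hS1 : ∀ x ∈ Ioc 0 a, v' x + p₁ x * u x + c x * v x = h₁ x)
    (hS2 : ∀ x ∈ Ioc 0 a, -u' x + c x * u x + p₂ x * v x = h₂ x)
    (hz : ∀ x ∈ Ioo 0 a, HasDerivAt z (h₁ x * f x + h₂ x * g x) x)
    (hzc : ContinuousOn z (Ioc 0 a))
    (hlim : Tendsto (fun x => f x * v x - g x * u x - z x) (𝓝[>] 0) (𝓝 0)) :
    EqOn (fun x => f x * v x - g x * u x) z (Ioc 0 a) := by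
  have hd : ∀ x ∈ Ioo 0 a, HasDerivAt (fun x => f x * v x - g x * u x - z x) 0 x := by
    intro x hx
    have hx' := Ioo_subset_Ioc_self hx
    refine ((((hf x hx').mul (hv x hx')).sub ((hg x hx').mul (hu x hx'))).sub
      (hz x hx)).congr_deriv ?_
    linear_combination -v x * hsys2 x hx' + f x * hS1 x hx' - u x * hsys1 x hx' + g x * hS2 x hx'
  have hc : ContinuousOn (fun x => f x * v x - g x * u x - z x) (Ioc 0 a) :=
    (((HasDerivAt.continuousOn hf).mul (HasDerivAt.continuousOn hv)).sub
      ((HasDerivAt.continuousOn hg).mul (HasDerivAt.continuousOn hu))).sub hzc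
  intro x hx
  exact sub_eq_zero.1 (eqOn_zero_of_hasDerivAt_zero_of_tendsto hd hc hlim hx)

theorem div_eqOn_of_tendsto
    (hf : ∀ x ∈ Ioc 0 a, HasDerivAt f (f' x) x) (hfne : ∀ x ∈ Ioc 0 a, f x ≠ 0)
    (hu : ∀ x ∈ Ioc 0 a, HasDerivAt u (u' x) x)
    (hsys2 : ∀ x ∈ Ioc 0 a, -f' x + c x * f x + p₂ x * g x = 0)
    (hS2 : ∀ x ∈ Ioc 0 a, -u' x + c x * u x + p₂ x * v x = h₂ x)
    (hW : EqOn (fun x => f x * v x - g x * u x) z (Ioc 0 a))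
    (hI : ∀ x ∈ Ioo 0 a, HasDerivAt I (-(h₂ x / f x) + p₂ x / f x ^ 2 * z x) x)
    (hIc : ContinuousOn I (Ioc 0 a))
    (hlim : Tendsto (fun x => u x / f x - I x) (𝓝[>] 0) (𝓝 0)) :
    EqOn (fun x => u x / f x) I (Ioc 0 a) := by
  have hd : ∀ x ∈ Ioo 0 a, HasDerivAt (fun x => u x / f x - I x) 0 x := by
    intro x hx
    have hx' := Ioo_subset_Ioc_self hx
    refine (((hu x hx').div (hf x hx') (hfne x hx')).sub (hI x hx)).congr_deriv ?_
    have hW' : f x * v x - g x * u x = z x := hW hx'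
    field_simp [hfne x hx']
    linear_combination -f x * hS2 x hx' + u x * hsys2 x hx' + p₂ x * hW'
  have hc : ContinuousOn (fun x => u x / f x - I x) (Ioc 0 a) :=
    ((HasDerivAt.continuousOn hu).div (HasDerivAt.continuousOn hf) hfne).sub hIc
  intro x hx
  exact sub_eq_zero.1 (eqOn_zero_of_hasDerivAt_zero_of_tendsto hd hc hlim hx)

theorem tendsto_wronskian_sub_of_isBigO
    (hu : u =O[𝓝[>] 0] fun x : ℝ => (x : ℂ) * f x) (hv : v =O[𝓝[>] 0] fun x : ℝ => (x : ℂ) * g x)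
    (hfg : (fun x => f x * g x) =O[𝓝[>] 0] fun _ => (1 : ℝ)) (hz : Tendsto z (𝓝[>] 0) (𝓝 0)) :
    Tendsto (fun x => f x * v x - g x * u x - z x) (𝓝[>] 0) (𝓝 0) := by
  have hxfg : Tendsto (fun x : ℝ => (x : ℂ) * (f x * g x)) (𝓝[>] 0) (𝓝 0) :=
    tendsto_ofReal_nhdsGT_zero.zero_mul_isBoundedUnder_le ((isBigO_one_iff ℝ).1 hfg)
  have hfv : (fun x => f x * v x) =O[𝓝[>] 0] fun x : ℝ => (x : ℂ) * (f x * g x) :=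
    ((isBigO_refl f _).mul hv).congr_right fun x => by ring
  have hgu : (fun x => g x * u x) =O[𝓝[>] 0] fun x : ℝ => (x : ℂ) * (f x * g x) :=
    ((isBigO_refl g _).mul hu).congr_right fun x => by ring
  simpa using ((hfv.trans_tendsto hxfg).sub (hgu.trans_tendsto hxfg)).sub hz

theorem tendsto_div_sub_of_isBigO (ha : 0 < a) (hfne : ∀ x ∈ Ioc 0 a, f x ≠ 0)
    (hu : u =O[𝓝[>] 0] fun x : ℝ => (x : ℂ) * f x) (hI : Tendsto I (𝓝[>] 0) (𝓝 0)) :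
    Tendsto (fun x => u x / f x - I x) (𝓝[>] 0) (𝓝 0) := by
  have hdiv : (fun x => u x / f x) =O[𝓝[>] 0] fun x : ℝ => (x : ℂ) := by
    refine (hu.mul (isBigO_refl (fun x => (f x)⁻¹) _)).congr' (Eventually.of_forall fun x => ?_) ?_
    · exact (div_eq_mul_inv _ _).symm
    · filter_upwards [Ioc_mem_nhdsGT ha] with x hx
      field_simp [hfne x hx]
  simpa using (hdiv.trans_tendsto tendsto_ofReal_nhdsGT_zero).sub hI

theorem isBigO_primitive_h_mul_add_h_mul {κ : ℝ} (hκ : 0 ≤ 2 * κ + 1)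
    (hh₁ : h₁ =O[𝓝[>] 0] fun x => x ^ (κ + 1)) (hh₂ : h₂ =O[𝓝[>] 0] fun x => x ^ (κ + 1))
    (hf : f =O[𝓝[>] 0] fun x => x ^ κ) (hg : g =O[𝓝[>] 0] fun x => x ^ (κ + 1)) :
    (fun x => ∫ t in (0 : ℝ)..x, (h₁ t * f t + h₂ t * g t)) =O[𝓝[>] 0]
      fun x => x ^ (2 * κ + 1 + 1) :=
  ((hh₁.mul_nhdsGT_zero_rpow hf (by linarith)).add
    (hh₂.mul_nhdsGT_zero_rpow hg (by linarith))).primitive_nhdsGT_zero_rpow (by linarith)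

theorem isBigO_primitive_neg_div_add_div_sq_mul {κ : ℝ}
    (hh₂ : h₂ =O[𝓝[>] 0] fun x => x ^ (κ + 1))
    (hf : (fun x => (f x)⁻¹) =O[𝓝[>] 0] fun x => x ^ (-κ))
    (hp₂ : p₂ =O[𝓝[>] 0] fun _ => (1 : ℝ)) (hz : z =O[𝓝[>] 0] fun x => x ^ (2 * κ + 1 + 1)) :
    (fun x => ∫ t in (0 : ℝ)..x, (-(h₂ t / f t) + p₂ t / f t ^ 2 * z t)) =O[𝓝[>] 0]
      fun x => x ^ ((1 : ℝ) + 1) := by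
  have hp₂z : (fun x => p₂ x * z x) =O[𝓝[>] 0] fun x => x ^ (2 * κ + 1 + 1) := by
    simpa only [one_mul] using hp₂.mul hz
  have hw := (hh₂.mul_nhdsGT_zero_rpow hf (c := 1) (by linarith)).neg_left.add
    (((hp₂z.mul_nhdsGT_zero_rpow hf (c := κ + 2) (by linarith)).mul_nhdsGT_zero_rpow hf
      (c := 1) (by linarith)))
  refine (hw.congr_left fun x => ?_).primitive_nhdsGT_zero_rpow zero_le_one
  ring

theorem isBigO_ofReal_mul_of_eqOn_mul {a r : ℝ} (ha : 0 < a)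
    (hu : ∀ x ∈ Ioc 0 a, u x = f x * I x) (hI : I =O[𝓝[>] 0] fun x => x ^ r) (hr : 1 ≤ r) :
    u =O[𝓝[>] 0] fun x : ℝ => (x : ℂ) * f x := by
  have hI' : I =O[𝓝[>] 0] fun x : ℝ => (x : ℂ) :=
    (hI.trans (isBigO_rpow_rpow_nhdsGT_zero_of_le hr)).trans (isTheta_ofReal_rpow_one _).symm.isBigO
  refine (eventuallyEq_of_mem (Ioc_mem_nhdsGT ha) hu).trans_isBigO ?_
  exact (hI'.mul (isBigO_refl f _)).congr_left fun x => mul_comm _ _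

theorem isBigO_ofReal_mul_of_eqOn_div {a κ r : ℝ} (ha : 0 < a)
    (hfne : ∀ x ∈ Ioc 0 a, f x ≠ 0) (hu : ∀ x ∈ Ioc 0 a, u x = f x * I x)
    (hv : ∀ x ∈ Ioc 0 a, v x = 1 / f x * (g x * u x + z x))
    (hI : I =O[𝓝[>] 0] fun x => x ^ r) (hr : 1 ≤ r) (hz : z =O[𝓝[>] 0] fun x => x ^ (2 * κ + 1 + 1))
    (hf : (fun x => (f x)⁻¹) =O[𝓝[>] 0] fun x => x ^ (-κ))
    (hg : (fun x => x ^ (κ + 1)) =O[𝓝[>] 0] g) :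
    v =O[𝓝[>] 0] fun x : ℝ => (x : ℂ) * g x := by
  have hxO := (isTheta_ofReal_rpow_one (𝓝[>] 0)).symm.isBigO
  have hgI : (fun x => I x * g x) =O[𝓝[>] 0] fun x : ℝ => (x : ℂ) * g x :=
    ((hI.trans (isBigO_rpow_rpow_nhdsGT_zero_of_le hr)).trans hxO).mul (isBigO_refl g _)
  have hzf : (fun x => z x * (f x)⁻¹) =O[𝓝[>] 0] fun x : ℝ => (x : ℂ) * g x :=
    ((hz.mul_nhdsGT_zero_rpow hf (c := 1 + (κ + 1)) (by linarith)).trans_eventuallyEq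
      (rpow_add_eventuallyEq_nhdsGT_zero 1 (κ + 1))).trans (hxO.mul hg)
  refine EventuallyEq.trans_isBigO ?_ (hgI.add hzf)
  filter_upwards [Ioc_mem_nhdsGT ha] with x hx
  rw [hv x hx, hu x hx]
  field_simp [hfne x hx]

theorem eq_of_isBigO_of_hasDerivAt {u₁ v₁ u₁' v₁' : ℝ → ℂ} (ha : 0 < a)
    (hf : ∀ x ∈ Ioc 0 a, HasDerivAt f (f' x) x) (hfne : ∀ x ∈ Ioc 0 a, f x ≠ 0)
    (hg : ∀ x ∈ Ioc 0 a, HasDerivAt g (g' x) x)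
    (hsys1 : ∀ x ∈ Ioc 0 a, g' x + p₁ x * f x + c x * g x = 0)
    (hsys2 : ∀ x ∈ Ioc 0 a, -f' x + c x * f x + p₂ x * g x = 0)
    (hz : ∀ x ∈ Ioo 0 a, HasDerivAt z (h₁ x * f x + h₂ x * g x) x)
    (hzc : ContinuousOn z (Ioc 0 a)) (hz0 : Tendsto z (𝓝[>] 0) (𝓝 0))
    (hI : ∀ x ∈ Ioo 0 a, HasDerivAt I (-(h₂ x / f x) + p₂ x / f x ^ 2 * z x) x)
    (hIc : ContinuousOn I (Ioc 0 a)) (hI0 : Tendsto I (𝓝[>] 0) (𝓝 0))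
    (hfg : (fun x => f x * g x) =O[𝓝[>] 0] fun _ => (1 : ℝ))
    (hu : ∀ x ∈ Ioc 0 a, u x = f x * I x) (hv : ∀ x ∈ Ioc 0 a, v x = 1 / f x * (g x * u x + z x))
    (hdu₁ : ∀ x ∈ Ioc 0 a, HasDerivAt u₁ (u₁' x) x) (hdv₁ : ∀ x ∈ Ioc 0 a, HasDerivAt v₁ (v₁' x) x)
    (hS1 : ∀ x ∈ Ioc 0 a, v₁' x + p₁ x * u₁ x + c x * v₁ x = h₁ x)
    (hS2 : ∀ x ∈ Ioc 0 a, -u₁' x + c x * u₁ x + p₂ x * v₁ x = h₂ x)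
    (hu₁O : u₁ =O[𝓝[>] 0] fun x : ℝ => (x : ℂ) * f x)
    (hv₁O : v₁ =O[𝓝[>] 0] fun x : ℝ => (x : ℂ) * g x) :
    ∀ x ∈ Ioc 0 a, u₁ x = u x ∧ v₁ x = v x := by
  have hW := wronskian_eqOn_of_tendsto hf hg hdu₁ hdv₁ hsys1 hsys2 hS1 hS2 hz hzc
    (tendsto_wronskian_sub_of_isBigO hu₁O hv₁O hfg hz0)
  have hQ := div_eqOn_of_tendsto hf hfne hdu₁ hsys2 hS2 hW hI hIc
    (tendsto_div_sub_of_isBigO ha hfne hu₁O hI0)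
  intro x hx
  have hu₁ : u₁ x = u x := by
    rw [hu x hx, mul_comm]
    exact (div_eq_iff (hfne x hx)).1 (hQ hx)
  refine ⟨hu₁, ?_⟩
  rw [hv x hx, ← hu₁, ← hW hx]
  field_simp [hfne x hx]
  ring

end DiracSystem

theorem nonhomogeneous_asymptotics_unique_general (a κ : ℝ) (ha : 0 < a) (hκ : 1 / 2 ≤ κ)
    (p₁ p₂ q f g f' g' h₁ h₂ z u v : ℝ → ℂ)
    (hp₂ : ContinuousOn p₂ (Set.Icc 0 a))
    (hp₁0 : p₁ 0 ≠ 0)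
    (hh₁ : ContinuousOn h₁ (Set.Icc 0 a))
    (hh₂ : ContinuousOn h₂ (Set.Icc 0 a))
    (hh₁O : h₁ =O[𝓝[>] (0:ℝ)] fun x => (x ^ (κ + 1) : ℝ))
    (hh₂O : h₂ =O[𝓝[>] (0:ℝ)] fun x => (x ^ (κ + 1) : ℝ))
    (hfne : ∀ x ∈ Set.Ioc (0:ℝ) a, f x ≠ 0)
    (hf : ∀ x ∈ Set.Ioc (0:ℝ) a, HasDerivAt f (f' x) x)
    (hg : ∀ x ∈ Set.Ioc (0:ℝ) a, HasDerivAt g (g' x) x)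
    (hsys1 : ∀ x ∈ Set.Ioc (0:ℝ) a,
      g' x + p₁ x * f x + (((κ / x : ℝ) : ℂ) + q x) * g x = 0)
    (hsys2 : ∀ x ∈ Set.Ioc (0:ℝ) a,
      -f' x + (((κ / x : ℝ) : ℂ) + q x) * f x + p₂ x * g x = 0)
    (hfasym : Tendsto (fun x => f x / ((x ^ κ : ℝ) : ℂ)) (𝓝[>] (0:ℝ)) (𝓝 1))
    (hgasym : Tendsto (fun x => g x / ((x ^ (κ + 1) : ℝ) : ℂ)) (𝓝[>] (0:ℝ))
      (𝓝 (-p₁ 0 / (2 * κ + 1))))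
    (hz : ∀ x ∈ Set.Ioc (0:ℝ) a,
      z x = ∫ t in (0:ℝ)..x, (h₁ t * f t + h₂ t * g t))
    (hu : ∀ x ∈ Set.Ioc (0:ℝ) a,
      u x = f x * ∫ t in (0:ℝ)..x, (-(h₂ t / f t) + p₂ t / f t ^ 2 * z t))
    (hv : ∀ x ∈ Set.Ioc (0:ℝ) a,
      v x = 1 / f x * (g x * u x + z x))
    (hint1 : ∀ x ∈ Set.Ioc (0:ℝ) a,
      IntervalIntegrable (fun t => h₁ t * f t + h₂ t * g t) volume 0 x)
    (hint2 : ∀ x ∈ Set.Ioc (0:ℝ) a,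
      IntervalIntegrable (fun t => -(h₂ t / f t) + p₂ t / f t ^ 2 * z t) volume 0 x) :
    (u =O[𝓝[>] (0:ℝ)] fun x => x * f x) ∧
    (v =O[𝓝[>] (0:ℝ)] fun x => x * g x) ∧
    (∀ u₁ v₁ u₁' v₁' : ℝ → ℂ,
      (∀ x ∈ Set.Ioc (0:ℝ) a, HasDerivAt u₁ (u₁' x) x) →
      (∀ x ∈ Set.Ioc (0:ℝ) a, HasDerivAt v₁ (v₁' x) x) →
      (∀ x ∈ Set.Ioc (0:ℝ) a,
        v₁' x + p₁ x * u₁ x + (((κ / x : ℝ) : ℂ) + q x) * v₁ x = h₁ x) →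
      (∀ x ∈ Set.Ioc (0:ℝ) a,
        -u₁' x + (((κ / x : ℝ) : ℂ) + q x) * u₁ x + p₂ x * v₁ x = h₂ x) →
      (u₁ =O[𝓝[>] (0:ℝ)] fun x => x * f x) →
      (v₁ =O[𝓝[>] (0:ℝ)] fun x => x * g x) →
      ∀ x ∈ Set.Ioc (0:ℝ) a, u₁ x = u x ∧ v₁ x = v x) := by
  have hfΘ : f =Θ[𝓝[>] 0] fun x => x ^ κ := isTheta_of_tendsto_div_ofReal one_ne_zero hfasym
  have hgΘ : g =Θ[𝓝[>] 0] fun x => x ^ (κ + 1) :=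
    isTheta_of_tendsto_div_ofReal (div_ne_zero (neg_ne_zero.2 hp₁0) (by norm_cast; linarith))
      hgasym
  have hfinv := hfΘ.inv_nhdsGT_zero_rpow.isBigO
  have hp₂O : p₂ =O[𝓝[>] 0] fun _ => (1 : ℝ) := ((hp₂ 0 ⟨le_rfl, ha.le⟩).tendsto.mono_left
    (nhdsWithin_le_of_mem (Icc_mem_nhdsGT ha))).isBigO_one ℝ
  have hzO : z =O[𝓝[>] 0] fun x => x ^ (2 * κ + 1 + 1) :=
    (eventuallyEq_of_mem (Ioc_mem_nhdsGT ha) hz).trans_isBigO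
      (isBigO_primitive_h_mul_add_h_mul (by linarith) hh₁O hh₂O hfΘ.isBigO hgΘ.isBigO)
  have hIO := isBigO_primitive_neg_div_add_div_sq_mul hh₂O hfinv hp₂O hzO
  have hfc : ContinuousOn f (Ioo 0 a) := (HasDerivAt.continuousOn hf).mono Ioo_subset_Ioc_self
  have hgc : ContinuousOn g (Ioo 0 a) := (HasDerivAt.continuousOn hg).mono Ioo_subset_Ioc_self
  obtain ⟨hzd, hzc⟩ := hasDerivAt_and_continuousOn_of_eqOn_primitive ha hz hint1
    (((hh₁.mono Ioo_subset_Icc_self).mul hfc).add ((hh₂.mono Ioo_subset_Icc_self).mul hgc))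
  obtain ⟨hId, hIc⟩ := hasDerivAt_and_continuousOn_of_eqOn_primitive ha (fun _ _ => rfl) hint2
    (((hh₂.mono Ioo_subset_Icc_self).div hfc fun x hx => hfne x (Ioo_subset_Ioc_self hx)).neg.add
      (((hp₂.mono Ioo_subset_Icc_self).div (hfc.pow 2) fun x hx =>
        pow_ne_zero 2 (hfne x (Ioo_subset_Ioc_self hx))).mul (hzc.mono Ioo_subset_Ioc_self)))
  have hfg : (fun x => f x * g x) =O[𝓝[>] 0] fun _ => (1 : ℝ) :=
    (hfΘ.isBigO.mul_nhdsGT_zero_rpow hgΘ.isBigO (c := 0) (by linarith)).congr_right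
      fun x => Real.rpow_zero x
  exact ⟨isBigO_ofReal_mul_of_eqOn_mul ha hu hIO (by norm_num),
    isBigO_ofReal_mul_of_eqOn_div ha hfne hu hv hIO (by norm_num) hzO hfinv hgΘ.symm.isBigO,
    fun u₁ v₁ u₁' v₁' => eq_of_isBigO_of_hasDerivAt ha hf hfne hg hsys1 hsys2 hzd hzc
      (hzO.tendsto_zero_of_rpow (by linarith)) hId hIc (hIO.tendsto_zero_of_rpow (by norm_num))
      hfg hu hv⟩

theorem nonhomogeneous_asymptotics_unique (a κ : ℝ) (ha : 0 < a) (hκ : 1 / 2 ≤ κ)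
    (p₁ p₂ q f g f' g' h₁ h₂ z u v : ℝ → ℂ)
    (hp₁ : ContinuousOn p₁ (Set.Icc 0 a))
    (hp₂ : ContinuousOn p₂ (Set.Icc 0 a))
    (hq : ContinuousOn q (Set.Icc 0 a))
    (hp₁0 : p₁ 0 ≠ 0)
    (hh₁ : ContinuousOn h₁ (Set.Icc 0 a))
    (hh₂ : ContinuousOn h₂ (Set.Icc 0 a))
    (hh₁O : h₁ =O[𝓝[>] (0:ℝ)] fun x => (x ^ (κ + 1) : ℝ))
    (hh₂O : h₂ =O[𝓝[>] (0:ℝ)] fun x => (x ^ (κ + 1) : ℝ))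
    (hfne : ∀ x ∈ Set.Ioc (0:ℝ) a, f x ≠ 0)
    (hf : ∀ x ∈ Set.Ioc (0:ℝ) a, HasDerivAt f (f' x) x)
    (hg : ∀ x ∈ Set.Ioc (0:ℝ) a, HasDerivAt g (g' x) x)
    (hsys1 : ∀ x ∈ Set.Ioc (0:ℝ) a,
      g' x + p₁ x * f x + (((κ / x : ℝ) : ℂ) + q x) * g x = 0)
    (hsys2 : ∀ x ∈ Set.Ioc (0:ℝ) a,
      -f' x + (((κ / x : ℝ) : ℂ) + q x) * f x + p₂ x * g x = 0)
    (hfasym : Tendsto (fun x => f x / ((x ^ κ : ℝ) : ℂ)) (𝓝[>] (0:ℝ)) (𝓝 1))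
    (hgasym : Tendsto (fun x => g x / ((x ^ (κ + 1) : ℝ) : ℂ)) (𝓝[>] (0:ℝ))
      (𝓝 (-p₁ 0 / (2 * κ + 1))))
    (hz : ∀ x ∈ Set.Ioc (0:ℝ) a,
      z x = ∫ t in (0:ℝ)..x, (h₁ t * f t + h₂ t * g t))
    (hu : ∀ x ∈ Set.Ioc (0:ℝ) a,
      u x = f x * ∫ t in (0:ℝ)..x, (-(h₂ t / f t) + p₂ t / f t ^ 2 * z t))
    (hv : ∀ x ∈ Set.Ioc (0:ℝ) a,
      v x = 1 / f x * (g x * u x + z x))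
    (hint1 : ∀ x ∈ Set.Ioc (0:ℝ) a,
      IntervalIntegrable (fun t => h₁ t * f t + h₂ t * g t) volume 0 x)
    (hint2 : ∀ x ∈ Set.Ioc (0:ℝ) a,
      IntervalIntegrable (fun t => -(h₂ t / f t) + p₂ t / f t ^ 2 * z t) volume 0 x) :
    (u =O[𝓝[>] (0:ℝ)] fun x => x * f x) ∧
    (v =O[𝓝[>] (0:ℝ)] fun x => x * g x) ∧
    (∀ u₁ v₁ u₁' v₁' : ℝ → ℂ,
      (∀ x ∈ Set.Ioc (0:ℝ) a, HasDerivAt u₁ (u₁' x) x) →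
      (∀ x ∈ Set.Ioc (0:ℝ) a, HasDerivAt v₁ (v₁' x) x) →
      (∀ x ∈ Set.Ioc (0:ℝ) a,
        v₁' x + p₁ x * u₁ x + (((κ / x : ℝ) : ℂ) + q x) * v₁ x = h₁ x) →
      (∀ x ∈ Set.Ioc (0:ℝ) a,
        -u₁' x + (((κ / x : ℝ) : ℂ) + q x) * u₁ x + p₂ x * v₁ x = h₂ x) →
      (u₁ =O[𝓝[>] (0:ℝ)] fun x => x * f x) →
      (v₁ =O[𝓝[>] (0:ℝ)] fun x => x * g x) →
      ∀ x ∈ Set.Ioc (0:ℝ) a, u₁ x = u x ∧ v₁ x = v x) :=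
  nonhomogeneous_asymptotics_unique_general a κ ha hκ p₁ p₂ q f g f' g' h₁ h₂ z u v hp₂ hp₁0 hh₁ hh₂
    hh₁O hh₂O hfne hf hg hsys1 hsys2 hfasym hgasym hz hu hv hint1 hint2
end

section
/- Let κ ≥ 1/2, and suppose f, g : [0,a] → ℂ satisfy |f(x)| ≤ c₁ x^κ, |g(x)| ≤ c₁ x^{κ+1}, |1/f(x)| ≤ c₂ x^{-κ}, |p₂(x)|^{1/2}/|f(x)| ≤ c₂ x^{-κ} for x ∈ (0,a], with c₁, c₂ ≥ 1, and let c₃ bound all |r_{ij}| on [0,a], ã = max{1,a}. Define recursively X̂⁽⁰⁾ = f, Ŷ⁽⁰⁾ = g, Ẑ⁽ⁿ⁾(x) = ∫₀ˣ [X̂⁽ⁿ⁾ (f r₁₁ + g r₂₁) + Ŷ⁽ⁿ⁾ (f r₁₂ + g r₂₂)] dt, X̂⁽ⁿ⁺¹⁾(x) = (n+1) f(x) ∫₀ˣ [ -(r₂₁/f) X̂⁽ⁿ⁾ - (r₂₂/f) Ŷ⁽ⁿ⁾ + (p₂/f²) Ẑ⁽ⁿ⁾ ] dt, Ŷ⁽ⁿ⁺¹⁾(x)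 = (n+1) Ẑ⁽ⁿ⁾(x)/f(x) + (g(x)/f(x)) X̂⁽ⁿ⁺¹⁾(x). Then for all n ≥ 1 and x ∈ (0,a]: |X̂⁽ⁿ⁾(x)| ≤ c₁ Mⁿ x^{n+κ} and |Ŷ⁽ⁿ⁾(x)| ≤ c₁ Mⁿ x^{n+κ}, where M = c₂ M_Z + c₁ c₂ ã M_X, M_Z = c₁ c₃ (1+ã)², M_X = c₁ c₂ c₃ [(1+ã) + c₁ c₂ (1+ã)² a]. -/
open Set Filter Topology intervalIntegral MeasureTheory

/-!
Induction on `n` with the invariant `‖X̂⁽ⁿ⁾(t)‖ ≤ c₁ Mⁿ t^(n+κ)`, `‖Ŷ⁽ⁿ⁾(t)‖ ≤ ã c₁ Mⁿ t^(n+κ)`;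
the factor `ã` is only needed for `Ŷ⁽⁰⁾ = g = O(t^(κ+1))` and disappears after one step.
Since `|f|, |g| = O(t^κ)` the integrand of `Ẑ⁽ⁿ⁾` is `O(t^(n+2κ))`, so `Ẑ⁽ⁿ⁾ = O(t^(n+2κ+1)/(n+1))`.
The weights `1/f` and `p₂/f²` cost at most `t^(-κ)` and `t^(-2κ)`, so the integrand of `X̂⁽ⁿ⁺¹⁾`
is `O(tⁿ)` with constant `Mⁿ M_X`; integrating gains `t^(n+1)/(n+1)`, and the `1/(n+1)` cancels
the factor `n+1` of the recursion. The same cancellation bounds `Ŷ⁽ⁿ⁺¹⁾` with constant `M`.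
-/

theorem norm_intervalIntegral_le_rpow {E : Type*} [NormedAddCommGroup E] [NormedSpace ℝ E]
    {h : ℝ → E} {x C p : ℝ} (hx : 0 ≤ x) (hp : -1 < p)
    (hh : ∀ t ∈ Ioc 0 x, ‖h t‖ ≤ C * t ^ p) :
    ‖∫ t in 0..x, h t‖ ≤ C * x ^ (p + 1) / (p + 1) :=
  calc ‖∫ t in 0..x, h t‖ ≤ ∫ t in 0..x, C * t ^ p :=
        norm_integral_le_of_norm_le hx (ae_of_all _ hh) ((intervalIntegrable_rpow' hp).const_mul C)
    _ = C * x ^ (p + 1) / (p + 1) := by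
        rw [intervalIntegral.integral_const_mul, integral_rpow (.inl hp),
          Real.zero_rpow (by linarith), sub_zero, mul_div_assoc]

theorem mul_rpow_add_one_le {t κ c atil : ℝ} (ht : 0 < t) (htil : t ≤ atil) (hc : 0 ≤ c * t ^ κ) :
    c * t ^ (κ + 1) ≤ atil * (c * t ^ κ) := by
  rw [Real.rpow_add_one ht.ne', ← mul_assoc, mul_comm atil]
  gcongr

theorem norm_div_sq_le_sq_of_rpow_half_div_le {𝕜 : Type*} [RCLike 𝕜] {p q : 𝕜} {c : ℝ}
    (h : ‖p‖ ^ ((1 : ℝ) / 2) / ‖q‖ ≤ c) : ‖p / q ^ 2‖ ≤ c ^ 2 := by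
  have hsq : ‖p / q ^ 2‖ = (‖p‖ ^ ((1 : ℝ) / 2) / ‖q‖) ^ 2 := by
    rw [div_pow, ← Real.rpow_natCast, ← Real.rpow_mul (norm_nonneg _), norm_div, norm_pow]
    norm_num
  rw [hsq]
  exact pow_le_pow_left₀ (by positivity) h 2

section

variable {𝕜 : Type*} [RCLike 𝕜]

theorem norm_mul_add_mul_le_rpow {f g r s : 𝕜} {t κ c₁ c₃ atil : ℝ} (ht : 0 < t) (htil : t ≤ atil)
    (hf : ‖f‖ ≤ c₁ * t ^ κ) (hg : ‖g‖ ≤ c₁ * t ^ (κ + 1)) (hr : ‖r‖ ≤ c₃) (hs : ‖s‖ ≤ c₃) :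
    ‖f * r + g * s‖ ≤ c₁ * c₃ * (1 + atil) * t ^ κ := by
  have hf₀ : 0 ≤ c₁ * t ^ κ := (norm_nonneg f).trans hf
  calc ‖f * r + g * s‖ ≤ ‖f‖ * ‖r‖ + ‖g‖ * ‖s‖ := by
        simpa only [norm_mul] using norm_add_le (f * r) (g * s)
    _ ≤ c₁ * t ^ κ * c₃ + atil * (c₁ * t ^ κ) * c₃ := by
        have hg' := hg.trans (mul_rpow_add_one_le ht htil hf₀)
        exact add_le_add (mul_le_mul hf hr (norm_nonneg _) hf₀)
          (mul_le_mul hg' hs (norm_nonneg _) ((norm_nonneg _).trans hg'))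
    _ = c₁ * c₃ * (1 + atil) * t ^ κ := by ring

theorem norm_X_integrand_le {R₁ R₂ P F U V W : 𝕜} (n : ℕ) {t a κ c₂ c₃ atil K B : ℝ}
    (ht : 0 < t) (hta : t ≤ a) (hR₁ : ‖R₁‖ ≤ c₃) (hR₂ : ‖R₂‖ ≤ c₃)
    (hF : ‖F⁻¹‖ ≤ c₂ * t ^ (-κ)) (hP : ‖P / F ^ 2‖ ≤ (c₂ * t ^ (-κ)) ^ 2)
    (hU : ‖U‖ ≤ K * t ^ ((n : ℝ) + κ)) (hV : ‖V‖ ≤ atil * K * t ^ ((n : ℝ) + κ))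
    (hW : ‖W‖ ≤ B * t ^ ((n : ℝ) + 2 * κ + 1) / (n + 1)) :
    ‖-(R₁ / F) * U - R₂ / F * V + P / F ^ 2 * W‖
      ≤ (c₂ * c₃ * (1 + atil) * K + c₂ ^ 2 * B * a) * t ^ (n : ℝ) := by
  have hc₃ : 0 ≤ c₃ := (norm_nonneg _).trans hR₁
  have hF₀ : 0 ≤ c₂ * t ^ (-κ) := (norm_nonneg _).trans hF
  have hW₀ : 0 ≤ B * t ^ ((n : ℝ) + 2 * κ + 1) / (n + 1) := (norm_nonneg _).trans hW
  have hB : 0 ≤ B := nonneg_of_mul_nonneg_left (by rwa [mul_div_assoc] at hW₀) (by positivity)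
  calc ‖-(R₁ / F) * U - R₂ / F * V + P / F ^ 2 * W‖
      ≤ ‖-(R₁ / F) * U‖ + ‖R₂ / F * V‖ + ‖P / F ^ 2 * W‖ :=
        (norm_add_le _ _).trans (add_le_add_left (norm_sub_le _ _) _)
    _ = ‖R₁‖ * ‖F⁻¹‖ * ‖U‖ + ‖R₂‖ * ‖F⁻¹‖ * ‖V‖ + ‖P / F ^ 2‖ * ‖W‖ := by
        rw [norm_mul, norm_mul, norm_mul, norm_neg, div_eq_mul_inv R₁, div_eq_mul_inv R₂, norm_mul,
          norm_mul]
    _ ≤ c₃ * (c₂ * t ^ (-κ)) * (K * t ^ ((n : ℝ) + κ))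
        + c₃ * (c₂ * t ^ (-κ)) * (atil * K * t ^ ((n : ℝ) + κ))
        + (c₂ * t ^ (-κ)) ^ 2 * (B * t ^ ((n : ℝ) + 2 * κ + 1) / (n + 1)) := by
        gcongr
    _ = (c₂ * c₃ * (1 + atil) * K + c₂ ^ 2 * B * (t / (n + 1))) * t ^ n := by
        have e₁ : t ^ ((n : ℝ) + κ) = t ^ n * t ^ κ := by
          rw [Real.rpow_add ht, Real.rpow_natCast]
        have e₂ : t ^ ((n : ℝ) + 2 * κ + 1) = t ^ n * t ^ κ * t ^ κ * t := by
          rw [Real.rpow_add_one ht.ne', two_mul, ← add_assoc, Real.rpow_add ht, e₁]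
        rw [Real.rpow_neg ht.le, e₁, e₂]
        field_simp
    _ ≤ (c₂ * c₃ * (1 + atil) * K + c₂ ^ 2 * B * a) * t ^ (n : ℝ) := by
        rw [Real.rpow_natCast]
        gcongr
        exact (div_le_self ht.le (le_add_of_nonneg_left n.cast_nonneg)).trans hta

theorem norm_natCast_add_one_mul_mul_integral_le {F : 𝕜} {h : ℝ → 𝕜} (n : ℕ) {x κ c D : ℝ}
    (hx : 0 < x) (hF : ‖F‖ ≤ c * x ^ κ) (hh : ∀ t ∈ Ioc 0 x, ‖h t‖ ≤ D * t ^ (n : ℝ)) :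
    ‖((n : 𝕜) + 1) * F * ∫ t in 0..x, h t‖ ≤ c * D * x ^ (((n + 1 : ℕ) : ℝ) + κ) := by
  have hn : ‖(n : 𝕜) + 1‖ = n + 1 := by exact_mod_cast RCLike.norm_natCast (K := 𝕜) (n + 1)
  have hint := norm_intervalIntegral_le_rpow hx.le (by linarith [n.cast_nonneg (α := ℝ)]) hh
  calc ‖((n : 𝕜) + 1) * F * ∫ t in 0..x, h t‖
      ≤ (n + 1) * (c * x ^ κ) * (D * x ^ ((n : ℝ) + 1) / (n + 1)) := by
        rw [norm_mul, norm_mul, hn]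
        gcongr
        exact mul_nonneg (by positivity) ((norm_nonneg F).trans hF)
    _ = c * D * x ^ (((n + 1 : ℕ) : ℝ) + κ) := by
        have e : x ^ (((n + 1 : ℕ) : ℝ) + κ) = x ^ κ * x ^ ((n : ℝ) + 1) := by
          rw [← Real.rpow_add hx]; push_cast; ring_nf
        rw [e]
        field_simp

theorem norm_Y_succ_le {W F G U : 𝕜} (n : ℕ) {x κ c₁ c₂ atil B E : ℝ} (hx : 0 < x)
    (hxa : x ≤ atil) (hW : ‖W‖ ≤ B * x ^ ((n : ℝ) + 2 * κ + 1) / (n + 1))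
    (hF : ‖F⁻¹‖ ≤ c₂ * x ^ (-κ)) (hG : ‖G‖ ≤ c₁ * x ^ (κ + 1))
    (hU : ‖U‖ ≤ E * x ^ (((n + 1 : ℕ) : ℝ) + κ)) :
    ‖((n : 𝕜) + 1) * W / F + G / F * U‖
      ≤ (c₂ * B + c₁ * c₂ * atil * E) * x ^ (((n + 1 : ℕ) : ℝ) + κ) := by
  have hn : ‖(n : 𝕜) + 1‖ = n + 1 := by exact_mod_cast RCLike.norm_natCast (K := 𝕜) (n + 1)
  have hF₀ : 0 ≤ c₂ * x ^ (-κ) := (norm_nonneg _).trans hF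
  have hc₁ : 0 ≤ c₁ := nonneg_of_mul_nonneg_left ((norm_nonneg G).trans hG) (by positivity)
  have hG' := hG.trans (mul_rpow_add_one_le hx hxa (by positivity : 0 ≤ c₁ * x ^ κ))
  calc ‖((n : 𝕜) + 1) * W / F + G / F * U‖
      ≤ (n + 1) * ‖W‖ * ‖F⁻¹‖ + ‖G‖ * ‖F⁻¹‖ * ‖U‖ := by
        refine (norm_add_le _ _).trans_eq ?_
        rw [div_eq_mul_inv, div_eq_mul_inv, norm_mul, norm_mul, norm_mul, norm_mul, hn]
    _ ≤ (n + 1) * (B * x ^ ((n : ℝ) + 2 * κ + 1) / (n + 1)) * (c₂ * x ^ (-κ))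
        + atil * (c₁ * x ^ κ) * (c₂ * x ^ (-κ)) * (E * x ^ (((n + 1 : ℕ) : ℝ) + κ)) := by
        gcongr
        · exact mul_nonneg (by positivity) ((norm_nonneg W).trans hW)
        · exact mul_nonneg ((norm_nonneg G).trans hG') hF₀
        · exact (norm_nonneg G).trans hG'
    _ = (c₂ * B + c₁ * c₂ * atil * E) * x ^ (((n + 1 : ℕ) : ℝ) + κ) := by
        have e : x ^ ((n : ℝ) + 2 * κ + 1) = x ^ (((n + 1 : ℕ) : ℝ) + κ) * x ^ κ := by
          rw [← Real.rpow_add hx]; push_cast; ring_nf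
        rw [Real.rpow_neg hx.le, e]
        field_simp

end

theorem MX_le_M {a c₁ c₂ c₃ atil MZ MX M : ℝ} (ha : 0 ≤ a) (hc₁ : 1 ≤ c₁)
    (hc₂ : 1 ≤ c₂) (hc₃ : 0 ≤ c₃) (hatil : 1 ≤ atil)
    (hMZ : MZ = c₁ * c₃ * (1 + atil) ^ 2)
    (hMX : MX = c₁ * c₂ * c₃ * ((1 + atil) + c₁ * c₂ * (1 + atil) ^ 2 * a))
    (hM : M = c₂ * MZ + c₁ * c₂ * atil * MX) :
    MX ≤ M := by
  have hc₁₀ : 0 ≤ c₁ := zero_le_one.trans hc₁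
  have hc₂₀ : 0 ≤ c₂ := zero_le_one.trans hc₂
  have hatil₀ : 0 ≤ atil := zero_le_one.trans hatil
  have hMX₀ : 0 ≤ MX := by rw [hMX]; positivity
  rw [hM, hMZ]
  exact le_add_of_nonneg_of_le (by positivity)
    (le_mul_of_one_le_left hMX₀
      (one_le_mul_of_one_le_of_one_le (one_le_mul_of_one_le_of_one_le hc₁ hc₂) hatil))

section

variable {𝕜 : Type*} [RCLike 𝕜] {a κ c₁ c₂ c₃ atil MZ MX M : ℝ} {p₂ r₁₁ r₁₂ r₂₁ r₂₂ f g : ℝ → 𝕜}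

theorem norm_Z_integral_le (hκ : 0 ≤ κ) (haatil : a ≤ atil) (n : ℕ) {K x : ℝ} {X Y : ℝ → 𝕜}
    (hx : x ∈ Ioc 0 a)
    (hr : ∀ t ∈ Icc 0 a, ‖r₁₁ t‖ ≤ c₃ ∧ ‖r₁₂ t‖ ≤ c₃ ∧ ‖r₂₁ t‖ ≤ c₃ ∧ ‖r₂₂ t‖ ≤ c₃)
    (hfb : ∀ t ∈ Ioc 0 a, ‖f t‖ ≤ c₁ * t ^ κ) (hgb : ∀ t ∈ Ioc 0 a, ‖g t‖ ≤ c₁ * t ^ (κ + 1))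
    (hX : ∀ t ∈ Ioc 0 a, ‖X t‖ ≤ K * t ^ ((n : ℝ) + κ))
    (hY : ∀ t ∈ Ioc 0 a, ‖Y t‖ ≤ atil * K * t ^ ((n : ℝ) + κ)) :
    ‖∫ t in 0..x, (X t * (f t * r₁₁ t + g t * r₂₁ t) + Y t * (f t * r₁₂ t + g t * r₂₂ t))‖
      ≤ c₁ * c₃ * (1 + atil) ^ 2 * K * x ^ ((n : ℝ) + 2 * κ + 1) / (n + 1) := by
  set C := c₁ * c₃ * (1 + atil) ^ 2 * K
  have hint : ∀ t ∈ Ioc 0 x, ‖X t * (f t * r₁₁ t + g t * r₂₁ t) + Y t * (f t * r₁₂ t + g t * r₂₂ t)‖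
      ≤ C * t ^ ((n : ℝ) + 2 * κ) := by
    rintro t ⟨ht, htx⟩
    have hta : t ∈ Ioc 0 a := ⟨ht, htx.trans hx.2⟩
    obtain ⟨h₁₁, h₁₂, h₂₁, h₂₂⟩ := hr t (Ioc_subset_Icc_self hta)
    have htil : t ≤ atil := hta.2.trans haatil
    have hA := norm_mul_add_mul_le_rpow ht htil (hfb t hta) (hgb t hta) h₁₁ h₂₁
    have hB := norm_mul_add_mul_le_rpow ht htil (hfb t hta) (hgb t hta) h₁₂ h₂₂
    have e : t ^ ((n : ℝ) + 2 * κ) = t ^ ((n : ℝ) + κ) * t ^ κ := by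
      rw [← Real.rpow_add ht]; ring_nf
    have hXt := hX t hta
    have hYt := hY t hta
    calc _ ≤ ‖X t‖ * ‖f t * r₁₁ t + g t * r₂₁ t‖ + ‖Y t‖ * ‖f t * r₁₂ t + g t * r₂₂ t‖ :=
          (norm_add_le _ _).trans_eq (by rw [norm_mul, norm_mul])
      _ ≤ K * t ^ ((n : ℝ) + κ) * (c₁ * c₃ * (1 + atil) * t ^ κ)
          + atil * K * t ^ ((n : ℝ) + κ) * (c₁ * c₃ * (1 + atil) * t ^ κ) :=
          add_le_add (mul_le_mul hXt hA (norm_nonneg _) ((norm_nonneg _).trans hXt))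
            (mul_le_mul hYt hB (norm_nonneg _) ((norm_nonneg _).trans hYt))
      _ = C * t ^ ((n : ℝ) + 2 * κ) := by rw [e]; ring
  have hC : 0 ≤ C := nonneg_of_mul_nonneg_left ((norm_nonneg _).trans (hint x ⟨hx.1, le_rfl⟩))
    (Real.rpow_pos_of_pos hx.1 _)
  have hn : (0 : ℝ) < n + 1 := by positivity
  calc _ ≤ C * x ^ ((n : ℝ) + 2 * κ + 1) / ((n : ℝ) + 2 * κ + 1) :=
        norm_intervalIntegral_le_rpow hx.1.le (by linarith) hint
    _ ≤ C * x ^ ((n : ℝ) + 2 * κ + 1) / (n + 1) :=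
        div_le_div_of_nonneg_left (mul_nonneg hC (Real.rpow_nonneg hx.1.le _)) hn (by linarith)

theorem formal_powers_succ_bounds (hκ : 0 ≤ κ) (hc₁ : 1 ≤ c₁) (hc₂ : 1 ≤ c₂) (hatil₁ : 1 ≤ atil)
    (haatil : a ≤ atil)
    (hMZ : MZ = c₁ * c₃ * (1 + atil) ^ 2)
    (hMX : MX = c₁ * c₂ * c₃ * ((1 + atil) + c₁ * c₂ * (1 + atil) ^ 2 * a))
    (hM : M = c₂ * MZ + c₁ * c₂ * atil * MX)
    (hr : ∀ x ∈ Icc 0 a, ‖r₁₁ x‖ ≤ c₃ ∧ ‖r₁₂ x‖ ≤ c₃ ∧ ‖r₂₁ x‖ ≤ c₃ ∧ ‖r₂₂ x‖ ≤ c₃)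
    (hfb : ∀ x ∈ Ioc 0 a, ‖f x‖ ≤ c₁ * x ^ κ)
    (hgb : ∀ x ∈ Ioc 0 a, ‖g x‖ ≤ c₁ * x ^ (κ + 1))
    (hfinv : ∀ x ∈ Ioc 0 a, ‖(f x)⁻¹‖ ≤ c₂ * x ^ (-κ))
    (hpf : ∀ x ∈ Ioc 0 a, ‖p₂ x‖ ^ ((1 : ℝ) / 2) / ‖f x‖ ≤ c₂ * x ^ (-κ))
    (n : ℕ) {K : ℝ} {X Y Z X' Y' : ℝ → 𝕜}
    (hZ : ∀ x ∈ Ioc 0 a, Z x = ∫ t in 0..x,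
      (X t * (f t * r₁₁ t + g t * r₂₁ t) + Y t * (f t * r₁₂ t + g t * r₂₂ t)))
    (hX' : ∀ x ∈ Ioc 0 a, X' x = ((n : 𝕜) + 1) * f x * ∫ t in 0..x,
      (-(r₂₁ t / f t) * X t - r₂₂ t / f t * Y t + p₂ t / f t ^ 2 * Z t))
    (hY' : ∀ x ∈ Ioc 0 a, Y' x = ((n : 𝕜) + 1) * Z x / f x + g x / f x * X' x)
    (hX : ∀ t ∈ Ioc 0 a, ‖X t‖ ≤ K * t ^ ((n : ℝ) + κ))
    (hY : ∀ t ∈ Ioc 0 a, ‖Y t‖ ≤ atil * K * t ^ ((n : ℝ) + κ)) :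
    ∀ x ∈ Ioc 0 a, ‖X' x‖ ≤ M * K * x ^ (((n + 1 : ℕ) : ℝ) + κ) ∧
      ‖Y' x‖ ≤ M * K * x ^ (((n + 1 : ℕ) : ℝ) + κ) := by
  have hZb : ∀ t ∈ Ioc 0 a, ‖Z t‖ ≤ MZ * K * t ^ ((n : ℝ) + 2 * κ + 1) / (n + 1) := fun t ht => by
    rw [hZ t ht, hMZ]
    exact norm_Z_integral_le hκ haatil n ht hr hfb hgb hX hY
  have hXb : ∀ x ∈ Ioc 0 a, ‖X' x‖ ≤ MX * K * x ^ (((n + 1 : ℕ) : ℝ) + κ) := fun x hx => by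
    rw [hX' x hx]
    -- `c₁ * D = MX * K`: this is where `M_X` comes from.
    refine (norm_natCast_add_one_mul_mul_integral_le n hx.1 (hfb x hx)
      (D := c₂ * c₃ * (1 + atil) * K + c₂ ^ 2 * (MZ * K) * a) fun t ht => ?_).trans_eq ?_
    · have hta : t ∈ Ioc 0 a := ⟨ht.1, ht.2.trans hx.2⟩
      obtain ⟨-, -, h₂₁, h₂₂⟩ := hr t (Ioc_subset_Icc_self hta)
      exact norm_X_integrand_le n hta.1 hta.2 h₂₁ h₂₂ (hfinv t hta)
        (norm_div_sq_le_sq_of_rpow_half_div_le (hpf t hta)) (hX t hta) (hY t hta) (hZb t hta)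
    · rw [hMX, hMZ]; ring
  intro x hx
  have hc₃ : 0 ≤ c₃ := (norm_nonneg _).trans (hr x (Ioc_subset_Icc_self hx)).1
  have hMXM := MX_le_M (hx.1.trans_le hx.2).le hc₁ hc₂ hc₃ hatil₁ hMZ hMX hM
  have hK : 0 ≤ K :=
    nonneg_of_mul_nonneg_left ((norm_nonneg _).trans (hX x hx)) (Real.rpow_pos_of_pos hx.1 _)
  refine ⟨(hXb x hx).trans (mul_le_mul_of_nonneg_right (mul_le_mul_of_nonneg_right hMXM hK)
    (Real.rpow_nonneg hx.1.le _)), ?_⟩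
  rw [hY' x hx]
  refine (norm_Y_succ_le n hx.1 (hx.2.trans haatil) (hZb x hx) (hfinv x hx) (hgb x hx)
    (hXb x hx)).trans_eq ?_
  rw [hM]; ring

end

theorem formal_powers_bounds_general (a κ c₁ c₂ c₃ atil M MZ MX : ℝ)
    (hκ : 1 / 2 ≤ κ) (hc₁ : 1 ≤ c₁) (hc₂ : 1 ≤ c₂)
    (hatil : atil = max 1 a)
    (hMZ : MZ = c₁ * c₃ * (1 + atil) ^ 2)
    (hMX : MX = c₁ * c₂ * c₃ * ((1 + atil) + c₁ * c₂ * (1 + atil) ^ 2 * a))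
    (hM : M = c₂ * MZ + c₁ * c₂ * atil * MX)
    (p₂ r₁₁ r₁₂ r₂₁ r₂₂ f g : ℝ → ℂ)
    (hr : ∀ x ∈ Set.Icc (0:ℝ) a,
      ‖r₁₁ x‖ ≤ c₃ ∧ ‖r₁₂ x‖ ≤ c₃ ∧ ‖r₂₁ x‖ ≤ c₃ ∧ ‖r₂₂ x‖ ≤ c₃)
    (hfb : ∀ x ∈ Set.Ioc (0:ℝ) a, ‖f x‖ ≤ c₁ * x ^ κ)
    (hgb : ∀ x ∈ Set.Ioc (0:ℝ) a, ‖g x‖ ≤ c₁ * x ^ (κ + 1))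
    (hfinv : ∀ x ∈ Set.Ioc (0:ℝ) a, ‖(f x)⁻¹‖ ≤ c₂ * x ^ (-κ))
    (hpf : ∀ x ∈ Set.Ioc (0:ℝ) a, ‖p₂ x‖ ^ ((1:ℝ)/2) / ‖f x‖ ≤ c₂ * x ^ (-κ))
    (X Y Z : ℕ → ℝ → ℂ)
    (hX0 : X 0 = f) (hY0 : Y 0 = g)
    (hZ : ∀ n, ∀ x ∈ Set.Ioc (0:ℝ) a, Z n x = ∫ t in (0:ℝ)..x,
      (X n t * (f t * r₁₁ t + g t * r₂₁ t) + Y n t * (f t * r₁₂ t + g t * r₂₂ t)))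
    (hXrec : ∀ n, ∀ x ∈ Set.Ioc (0:ℝ) a,
      X (n + 1) x = ((n : ℂ) + 1) * f x * ∫ t in (0:ℝ)..x,
        (-(r₂₁ t / f t) * X n t - r₂₂ t / f t * Y n t + p₂ t / f t ^ 2 * Z n t))
    (hYrec : ∀ n, ∀ x ∈ Set.Ioc (0:ℝ) a,
      Y (n + 1) x = ((n : ℂ) + 1) * Z n x / f x + g x / f x * X (n + 1) x) :
    ∀ n : ℕ, 1 ≤ n → ∀ x ∈ Set.Ioc (0:ℝ) a,
      ‖X n x‖ ≤ c₁ * M ^ n * x ^ ((n : ℝ) + κ) ∧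
      ‖Y n x‖ ≤ c₁ * M ^ n * x ^ ((n : ℝ) + κ) := by
  have hatil₁ : 1 ≤ atil := hatil ▸ le_max_left 1 a
  have haatil : a ≤ atil := hatil ▸ le_max_right 1 a
  have hsucc : ∀ m, (∀ t ∈ Ioc 0 a, ‖X m t‖ ≤ c₁ * M ^ m * t ^ ((m : ℝ) + κ) ∧
        ‖Y m t‖ ≤ atil * (c₁ * M ^ m) * t ^ ((m : ℝ) + κ)) →
      ∀ t ∈ Ioc 0 a, ‖X (m + 1) t‖ ≤ c₁ * M ^ (m + 1) * t ^ (((m + 1 : ℕ) : ℝ) + κ) ∧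
        ‖Y (m + 1) t‖ ≤ c₁ * M ^ (m + 1) * t ^ (((m + 1 : ℕ) : ℝ) + κ) := by
    intro m ih t ht
    rw [pow_succ', mul_left_comm]
    exact formal_powers_succ_bounds (by linarith) hc₁ hc₂ hatil₁ haatil hMZ hMX hM hr hfb hgb
      hfinv hpf m (hZ m) (hXrec m) (hYrec m) (fun t ht => (ih t ht).1) (fun t ht => (ih t ht).2) t ht
  have hbound : ∀ m, ∀ t ∈ Ioc 0 a, ‖X m t‖ ≤ c₁ * M ^ m * t ^ ((m : ℝ) + κ) ∧
      ‖Y m t‖ ≤ atil * (c₁ * M ^ m) * t ^ ((m : ℝ) + κ) := by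
    intro m
    induction m with
    | zero =>
      intro t ht
      simp only [hX0, hY0, pow_zero, mul_one, Nat.cast_zero, zero_add]
      exact ⟨hfb t ht, ((hgb t ht).trans (mul_rpow_add_one_le ht.1 (ht.2.trans haatil)
        (mul_nonneg (zero_le_one.trans hc₁) (Real.rpow_nonneg ht.1.le κ)))).trans_eq (by ring)⟩
    | succ m ih =>
      refine fun t ht => (hsucc m ih t ht).imp_right fun h =>
        (h.trans (le_mul_of_one_le_left ((norm_nonneg _).trans h) hatil₁)).trans_eq (by ring)
  intro n hn x hx
  obtain ⟨m, rfl⟩ := Nat.exists_eq_add_of_le' hn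
  exact hsucc m (hbound m) x hx

theorem formal_powers_bounds (a κ c₁ c₂ c₃ atil M MZ MX : ℝ)
    (ha : 0 < a) (hκ : 1 / 2 ≤ κ) (hc₁ : 1 ≤ c₁) (hc₂ : 1 ≤ c₂)
    (hatil : atil = max 1 a)
    (hMZ : MZ = c₁ * c₃ * (1 + atil) ^ 2)
    (hMX : MX = c₁ * c₂ * c₃ * ((1 + atil) + c₁ * c₂ * (1 + atil) ^ 2 * a))
    (hM : M = c₂ * MZ + c₁ * c₂ * atil * MX)
    (p₂ r₁₁ r₁₂ r₂₁ r₂₂ f g : ℝ → ℂ)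
    (hr : ∀ x ∈ Set.Icc (0:ℝ) a,
      ‖r₁₁ x‖ ≤ c₃ ∧ ‖r₁₂ x‖ ≤ c₃ ∧ ‖r₂₁ x‖ ≤ c₃ ∧ ‖r₂₂ x‖ ≤ c₃)
    (hfne : ∀ x ∈ Set.Ioc (0:ℝ) a, f x ≠ 0)
    (hfb : ∀ x ∈ Set.Ioc (0:ℝ) a, ‖f x‖ ≤ c₁ * x ^ κ)
    (hgb : ∀ x ∈ Set.Ioc (0:ℝ) a, ‖g x‖ ≤ c₁ * x ^ (κ + 1))
    (hfinv : ∀ x ∈ Set.Ioc (0:ℝ) a, ‖(f x)⁻¹‖ ≤ c₂ * x ^ (-κ))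
    (hpf : ∀ x ∈ Set.Ioc (0:ℝ) a, ‖p₂ x‖ ^ ((1:ℝ)/2) / ‖f x‖ ≤ c₂ * x ^ (-κ))
    (X Y Z : ℕ → ℝ → ℂ)
    (hX0 : X 0 = f) (hY0 : Y 0 = g)
    (hZ : ∀ n, ∀ x ∈ Set.Ioc (0:ℝ) a, Z n x = ∫ t in (0:ℝ)..x,
      (X n t * (f t * r₁₁ t + g t * r₂₁ t) + Y n t * (f t * r₁₂ t + g t * r₂₂ t)))
    (hXrec : ∀ n, ∀ x ∈ Set.Ioc (0:ℝ) a,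
      X (n + 1) x = ((n : ℂ) + 1) * f x * ∫ t in (0:ℝ)..x,
        (-(r₂₁ t / f t) * X n t - r₂₂ t / f t * Y n t + p₂ t / f t ^ 2 * Z n t))
    (hYrec : ∀ n, ∀ x ∈ Set.Ioc (0:ℝ) a,
      Y (n + 1) x = ((n : ℂ) + 1) * Z n x / f x + g x / f x * X (n + 1) x)
    (hintZ : ∀ n, ∀ x ∈ Set.Ioc (0:ℝ) a, IntervalIntegrable
      (fun t => X n t * (f t * r₁₁ t + g t * r₂₁ t)
        + Y n t * (f t * r₁₂ t + g t * r₂₂ t)) volume 0 x)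
    (hintX : ∀ n, ∀ x ∈ Set.Ioc (0:ℝ) a, IntervalIntegrable
      (fun t => -(r₂₁ t / f t) * X n t - r₂₂ t / f t * Y n t
        + p₂ t / f t ^ 2 * Z n t) volume 0 x) :
    ∀ n : ℕ, 1 ≤ n → ∀ x ∈ Set.Ioc (0:ℝ) a,
      ‖X n x‖ ≤ c₁ * M ^ n * x ^ ((n : ℝ) + κ) ∧
      ‖Y n x‖ ≤ c₁ * M ^ n * x ^ ((n : ℝ) + κ) :=
  formal_powers_bounds_general a κ c₁ c₂ c₃ atil M MZ MX hκ hc₁ hc₂ hatil hMZ hMX hM p₂ r₁₁ r₁₂ r₂₁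
    r₂₂ f g hr hfb hgb hfinv hpf X Y Z hX0 hY0 hZ hXrec hYrec
end

section
/- Suppose (u,v) is the regular solution of the radial Dirac system v' + p₁u + (κ/x + q)v = λ(r₁₁ u + r₁₂ v), -u' + (κ/x + q)u + p₂ v = λ(r₂₁ u + r₂₂ v), meaning u(x) ∼ x^κ, u'(x) ∼ κ x^{κ-1}, v(x) ∼ μ x^{κ+1}, v'(x) ∼ μ(κ+1) x^κ as x → 0, where all coefficients are continuous on [0,a] and q is continuous at 0. Then necessarily μ = (λ r₁₁(0) - p₁(0))/(2κ + 1). -/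
open Set Filter Topology

theorem mu_formula (a κ : ℝ) (ha : 0 < a) (hκ : 1 / 2 ≤ κ) (lam μ : ℂ)
    (p₁ p₂ q r₁₁ r₁₂ r₂₁ r₂₂ u v u' v' : ℝ → ℂ)
    (hp₁ : ContinuousOn p₁ (Set.Icc 0 a))
    (hp₂ : ContinuousOn p₂ (Set.Icc 0 a))
    (hq : ContinuousOn q (Set.Icc 0 a))
    (hr₁₁ : ContinuousOn r₁₁ (Set.Icc 0 a))
    (hr₁₂ : ContinuousOn r₁₂ (Set.Icc 0 a))
    (hr₂₁ : ContinuousOn r₂₁ (Set.Icc 0 a))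
    (hr₂₂ : ContinuousOn r₂₂ (Set.Icc 0 a))
    (hud : ∀ x ∈ Set.Ioc (0:ℝ) a, HasDerivAt u (u' x) x)
    (hvd : ∀ x ∈ Set.Ioc (0:ℝ) a, HasDerivAt v (v' x) x)
    (hsys1 : ∀ x ∈ Set.Ioc (0:ℝ) a,
      v' x + p₁ x * u x + (((κ / x : ℝ) : ℂ) + q x) * v x =
        lam * (r₁₁ x * u x + r₁₂ x * v x))
    (hsys2 : ∀ x ∈ Set.Ioc (0:ℝ) a,
      -u' x + (((κ / x : ℝ) : ℂ) + q x) * u x + p₂ x * v x =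
        lam * (r₂₁ x * u x + r₂₂ x * v x))
    (huasym : Tendsto (fun x => u x / ((x ^ κ : ℝ) : ℂ)) (𝓝[>] (0:ℝ)) (𝓝 1))
    (hu'asym : Tendsto (fun x => u' x / ((x ^ (κ - 1) : ℝ) : ℂ)) (𝓝[>] (0:ℝ))
      (𝓝 (κ : ℂ)))
    (hvasym : Tendsto (fun x => v x / ((x ^ (κ + 1) : ℝ) : ℂ)) (𝓝[>] (0:ℝ)) (𝓝 μ))
    (hv'asym : Tendsto (fun x => v' x / ((x ^ κ : ℝ) : ℂ)) (𝓝[>] (0:ℝ))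
      (𝓝 (μ * ((κ : ℂ) + 1)))) :
    μ = (lam * r₁₁ 0 - p₁ 0) / (2 * κ + 1) := by
  have hIoc : Set.Ioc (0:ℝ) a ∈ 𝓝[>] (0:ℝ) := Ioc_mem_nhdsGT_of_mem ⟨le_rfl, ha⟩
  have hIcc : Set.Icc (0:ℝ) a ∈ 𝓝[>] (0:ℝ) := Filter.mem_of_superset hIoc Set.Ioc_subset_Icc_self
  have hle : 𝓝[>] (0:ℝ) ≤ 𝓝[Set.Icc 0 a] (0:ℝ) := nhdsWithin_le_iff.mpr hIcc
  have hp₁0 : Tendsto p₁ (𝓝[>] (0:ℝ)) (𝓝 (p₁ 0)) :=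
    (hp₁ 0 ⟨le_rfl, ha.le⟩).mono_left hle
  have hq0 : Tendsto q (𝓝[>] (0:ℝ)) (𝓝 (q 0)) :=
    (hq 0 ⟨le_rfl, ha.le⟩).mono_left hle
  have hr₁₁0 : Tendsto r₁₁ (𝓝[>] (0:ℝ)) (𝓝 (r₁₁ 0)) :=
    (hr₁₁ 0 ⟨le_rfl, ha.le⟩).mono_left hle
  have hr₁₂0 : Tendsto r₁₂ (𝓝[>] (0:ℝ)) (𝓝 (r₁₂ 0)) :=
    (hr₁₂ 0 ⟨le_rfl, ha.le⟩).mono_left hle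
  have hx0 : Tendsto (fun x : ℝ => (x : ℂ)) (𝓝[>] (0:ℝ)) (𝓝 0) := by
    have : Tendsto (fun x : ℝ => (x : ℂ)) (𝓝 (0:ℝ)) (𝓝 ((0:ℝ):ℂ)) :=
      Complex.continuous_ofReal.tendsto 0
    simpa using this.mono_left nhdsWithin_le_nhds
  -- limit of LHS of system 1 divided by x^κ
  have hF : Tendsto (fun x : ℝ => v' x / ((x ^ κ : ℝ) : ℂ) + p₁ x * (u x / ((x ^ κ : ℝ) : ℂ))
      + (κ : ℂ) * (v x / ((x ^ (κ+1) : ℝ) : ℂ)) + (q x * (x : ℂ)) * (v x / ((x ^ (κ+1) : ℝ) : ℂ)))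
      (𝓝[>] (0:ℝ)) (𝓝 (μ * ((κ:ℂ) + 1) + p₁ 0 * 1 + (κ:ℂ) * μ + (q 0 * 0) * μ)) :=
    ((hv'asym.add (hp₁0.mul huasym)).add (tendsto_const_nhds.mul hvasym)).add
      ((hq0.mul hx0).mul hvasym)
  have hG : Tendsto (fun x : ℝ => lam * (r₁₁ x * (u x / ((x ^ κ : ℝ) : ℂ))
      + (r₁₂ x * (x : ℂ)) * (v x / ((x ^ (κ+1) : ℝ) : ℂ))))
      (𝓝[>] (0:ℝ)) (𝓝 (lam * (r₁₁ 0 * 1 + (r₁₂ 0 * 0) * μ))) :=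
    tendsto_const_nhds.mul ((hr₁₁0.mul huasym).add ((hr₁₂0.mul hx0).mul hvasym))
  have heq : ∀ᶠ x in 𝓝[>] (0:ℝ),
      v' x / ((x ^ κ : ℝ) : ℂ) + p₁ x * (u x / ((x ^ κ : ℝ) : ℂ))
      + (κ : ℂ) * (v x / ((x ^ (κ+1) : ℝ) : ℂ)) + (q x * (x : ℂ)) * (v x / ((x ^ (κ+1) : ℝ) : ℂ))
      = lam * (r₁₁ x * (u x / ((x ^ κ : ℝ) : ℂ))
      + (r₁₂ x * (x : ℂ)) * (v x / ((x ^ (κ+1) : ℝ) : ℂ))) := by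
    filter_upwards [hIoc] with x hx
    have hx0' : (0:ℝ) < x := hx.1
    have hxne : (x:ℂ) ≠ 0 := by exact_mod_cast hx0'.ne'
    have hpowne : ((x ^ κ : ℝ) : ℂ) ≠ 0 := by
      exact_mod_cast (Real.rpow_pos_of_pos hx0' κ).ne'
    have hsplit : ((x ^ (κ+1) : ℝ) : ℂ) = ((x ^ κ : ℝ) : ℂ) * (x:ℂ) := by
      rw [Real.rpow_add_one hx0'.ne']; push_cast; ring
    have h1 := hsys1 x hx
    have hcast : (((κ / x : ℝ)) : ℂ) = (κ:ℂ) / (x:ℂ) := by push_cast; ring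
    rw [hcast] at h1
    rw [hsplit]
    calc v' x / ((x ^ κ : ℝ) : ℂ) + p₁ x * (u x / ((x ^ κ : ℝ) : ℂ))
          + (κ : ℂ) * (v x / (((x ^ κ : ℝ) : ℂ) * (x:ℂ)))
          + (q x * (x : ℂ)) * (v x / (((x ^ κ : ℝ) : ℂ) * (x:ℂ)))
        = (v' x + p₁ x * u x + ((κ:ℂ)/(x:ℂ) + q x) * v x) / ((x ^ κ : ℝ) : ℂ) := by
          field_simp
          ring
      _ = lam * (r₁₁ x * u x + r₁₂ x * v x) / ((x ^ κ : ℝ) : ℂ) := by rw [h1]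
      _ = lam * (r₁₁ x * (u x / ((x ^ κ : ℝ) : ℂ))
          + (r₁₂ x * (x : ℂ)) * (v x / (((x ^ κ : ℝ) : ℂ) * (x:ℂ)))) := by
          field_simp
  have hkey := tendsto_nhds_unique (hF.congr' heq) hG
  have h2κ : ((2:ℂ) * (κ:ℂ) + 1) ≠ 0 := by
    have : (2*κ+1 : ℝ) ≠ 0 := by linarith
    exact_mod_cast this
  field_simp
  linear_combination hkey
end

section
/- Let f, g, h₁, h₂ be continuous on (0,a] with f(x) ∼ x^κ, g(x) ∼ μ x^{κ+1} (μ ≠ 0), h₁(x) = O(x^{κ+1}), h₂(x) = O(x^{κ+1}) as x → 0, κ ≥ 1/2, and set z(x) = ∫₀ˣ (h₁ f + h₂ g) dt. Then z(x)/(f(x) g(x)) → 0 as x → 0⁺. -/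
open Set Filter Topology intervalIntegral MeasureTheory Asymptotics

/-!
Near `0` the integrand `h₁ f + h₂ g` is `O(x ^ (2κ + 1))`, so its primitive `z` is
`O(x ^ (2κ + 2)) = o(x ^ (2κ + 1))`, whereas `f g ∼ μ x ^ (2κ + 1)` with `μ ≠ 0`.
-/

lemma rpow_mul_rpow_eventuallyEq_nhdsGT_zero {a b c : ℝ} (h : a + b = c) :
    (fun x : ℝ => x ^ a * x ^ b) =ᶠ[𝓝[>] 0] fun x => x ^ c := by
  filter_upwards [self_mem_nhdsWithin] with x hx
  rw [← h, Real.rpow_add hx]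

lemma rpow_add_one_isLittleO_rpow_nhdsGT_zero (q : ℝ) :
    (fun x : ℝ => x ^ (q + 1)) =o[𝓝[>] 0] fun x => x ^ q := by
  have hx : (fun x : ℝ => x) =o[𝓝[>] 0] fun _ => (1 : ℝ) :=
    isLittleO_one_iff ℝ |>.2 <| tendsto_nhdsWithin_of_tendsto_nhds tendsto_id
  refine (hx.mul_isBigO (isBigO_refl (fun x : ℝ => x ^ q) _)).congr' ?_ (by simp)
  filter_upwards [self_mem_nhdsWithin] with x hx
  rw [Real.rpow_add_one (ne_of_gt hx), mul_comm]

lemma isBigO_rpow_of_tendsto_div_rpow {u : ℝ → ℂ} {q : ℝ} {c : ℂ}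
    (h : Tendsto (fun x => u x / ((x ^ q : ℝ) : ℂ)) (𝓝[>] 0) (𝓝 c)) :
    u =O[𝓝[>] 0] fun x => x ^ q := by
  refine Complex.isBigO_ofReal_right.1 <| isBigO_of_div_tendsto_nhds ?_ c h
  filter_upwards [self_mem_nhdsWithin] with x hx hq
  exact absurd hq (Complex.ofReal_ne_zero.2 (Real.rpow_pos_of_pos hx q).ne')

lemma tendsto_mul_div_rpow_nhdsGT_zero {u v : ℝ → ℂ} {a b e : ℝ} {c d : ℂ}
    (hu : Tendsto (fun x => u x / ((x ^ a : ℝ) : ℂ)) (𝓝[>] 0) (𝓝 c))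
    (hv : Tendsto (fun x => v x / ((x ^ b : ℝ) : ℂ)) (𝓝[>] 0) (𝓝 d)) (h : a + b = e) :
    Tendsto (fun x => u x * v x / ((x ^ e : ℝ) : ℂ)) (𝓝[>] 0) (𝓝 (c * d)) := by
  refine (hu.mul hv).congr' ?_
  filter_upwards [rpow_mul_rpow_eventuallyEq_nhdsGT_zero h] with x hx
  rw [← hx, Complex.ofReal_mul, div_mul_div_comm]

/-- No integrability hypothesis is needed: the interval integral of a non-integrable function
is `0`. -/
lemma intervalIntegral_isBigO_rpow_add_one {E : Type*} [NormedAddCommGroup E] [NormedSpace ℝ E]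
    {F : ℝ → E} {p : ℝ} (hp : 0 ≤ p) (hF : F =O[𝓝[>] 0] fun x => x ^ p) :
    (fun x => ∫ t in (0 : ℝ)..x, F t) =O[𝓝[>] 0] fun x => x ^ (p + 1) := by
  obtain ⟨C, hC, hCF⟩ := hF.exists_nonneg
  obtain ⟨δ, hδ, hδF⟩ := mem_nhdsGT_iff_exists_Ioc_subset.1 hCF.bound
  refine IsBigO.of_bound C ?_
  filter_upwards [Ioc_mem_nhdsGT hδ] with x hx
  have hbound : ∀ t ∈ uIoc (0 : ℝ) x, ‖F t‖ ≤ C * x ^ p := by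
    intro t ht
    rw [uIoc_of_le hx.1.le] at ht
    calc ‖F t‖ ≤ C * ‖t ^ p‖ := hδF ⟨ht.1, ht.2.trans hx.2⟩
      _ = C * t ^ p := by rw [Real.norm_of_nonneg (Real.rpow_nonneg ht.1.le p)]
      _ ≤ C * x ^ p := by gcongr; exacts [ht.1.le, ht.2]
  calc ‖∫ t in (0 : ℝ)..x, F t‖ ≤ C * x ^ p * |x - 0| := norm_integral_le_of_norm_le_const hbound
    _ = C * ‖x ^ (p + 1)‖ := by
      rw [sub_zero, abs_of_pos hx.1, Real.rpow_add_one hx.1.ne',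
        Real.norm_of_nonneg (mul_pos (Real.rpow_pos_of_pos hx.1 p) hx.1).le, mul_assoc]

theorem z_over_fg_tendsto_zero_general (a κ : ℝ) (ha : 0 < a) (hκ : 1 / 2 ≤ κ) (μ : ℂ)
    (hμ : μ ≠ 0)
    (f g h₁ h₂ z : ℝ → ℂ)
    (hfasym : Tendsto (fun x => f x / ((x ^ κ : ℝ) : ℂ)) (𝓝[>] (0:ℝ)) (𝓝 1))
    (hgasym : Tendsto (fun x => g x / ((x ^ (κ + 1) : ℝ) : ℂ)) (𝓝[>] (0:ℝ)) (𝓝 μ))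
    (hh₁O : h₁ =O[𝓝[>] (0:ℝ)] fun x => (x ^ (κ + 1) : ℝ))
    (hh₂O : h₂ =O[𝓝[>] (0:ℝ)] fun x => (x ^ (κ + 1) : ℝ))
    (hz : ∀ x ∈ Set.Ioc (0:ℝ) a,
      z x = ∫ t in (0:ℝ)..x, (h₁ t * f t + h₂ t * g t)) :
    Tendsto (fun x => z x / (f x * g x)) (𝓝[>] (0:ℝ)) (𝓝 0) := by
  have hf := isBigO_rpow_of_tendsto_div_rpow hfasym
  have hg := isBigO_rpow_of_tendsto_div_rpow hgasym
  have hintegrand : (fun t => h₁ t * f t + h₂ t * g t) =O[𝓝[>] 0] fun x => x ^ (2 * κ + 1) :=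
    ((hh₁O.mul hf).trans_eventuallyEq (rpow_mul_rpow_eventuallyEq_nhdsGT_zero (by ring))).add
      ((hh₂O.mul hg).trans_eventuallyEq (rpow_mul_rpow_eventuallyEq_nhdsGT_zero (by ring))
        |>.trans_isLittleO (rpow_add_one_isLittleO_rpow_nhdsGT_zero _) |>.isBigO)
  have hzO : z =O[𝓝[>] 0] fun x => x ^ (2 * κ + 1 + 1) := by
    refine (intervalIntegral_isBigO_rpow_add_one (by linarith) hintegrand).congr' ?_ .rfl
    filter_upwards [Ioc_mem_nhdsGT ha] with x hx using (hz x hx).symm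
  have hfg : (fun x => x ^ (2 * κ + 1)) =O[𝓝[>] 0] fun x => f x * g x := by
    refine Complex.isBigO_ofReal_left.1 <| isBigO_of_div_tendsto_nhds_of_ne_zero
      (tendsto_mul_div_rpow_nhdsGT_zero hfasym hgasym (by ring)) ?_
    rwa [one_mul]
  exact ((hzO.trans_isLittleO (rpow_add_one_isLittleO_rpow_nhdsGT_zero _)).trans_isBigO
    hfg).tendsto_div_nhds_zero

theorem z_over_fg_tendsto_zero (a κ : ℝ) (ha : 0 < a) (hκ : 1 / 2 ≤ κ) (μ : ℂ)
    (hμ : μ ≠ 0)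
    (f g h₁ h₂ z : ℝ → ℂ)
    (hfc : ContinuousOn f (Set.Ioc 0 a))
    (hgc : ContinuousOn g (Set.Ioc 0 a))
    (hfne : ∀ x ∈ Set.Ioc (0:ℝ) a, f x ≠ 0)
    (hgne : ∀ x ∈ Set.Ioc (0:ℝ) a, g x ≠ 0)
    (hfasym : Tendsto (fun x => f x / ((x ^ κ : ℝ) : ℂ)) (𝓝[>] (0:ℝ)) (𝓝 1))
    (hgasym : Tendsto (fun x => g x / ((x ^ (κ + 1) : ℝ) : ℂ)) (𝓝[>] (0:ℝ)) (𝓝 μ))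
    (hh₁ : ContinuousOn h₁ (Set.Icc 0 a))
    (hh₂ : ContinuousOn h₂ (Set.Icc 0 a))
    (hh₁O : h₁ =O[𝓝[>] (0:ℝ)] fun x => (x ^ (κ + 1) : ℝ))
    (hh₂O : h₂ =O[𝓝[>] (0:ℝ)] fun x => (x ^ (κ + 1) : ℝ))
    (hz : ∀ x ∈ Set.Ioc (0:ℝ) a,
      z x = ∫ t in (0:ℝ)..x, (h₁ t * f t + h₂ t * g t))
    (hint : ∀ x ∈ Set.Ioc (0:ℝ) a,
      IntervalIntegrable (fun t => h₁ t * f t + h₂ t * g t) volume 0 x) :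
    Tendsto (fun x => z x / (f x * g x)) (𝓝[>] (0:ℝ)) (𝓝 0) :=
  z_over_fg_tendsto_zero_general a κ ha hκ μ hμ f g h₁ h₂ z hfasym hgasym hh₁O hh₂O hz
end
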